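/- Let f be a problem with f ≰_W id whose domain is a singleton. Then for every problem h with f ≰_W h there exists a problem g with g <_W f and g ≰_W h; consequently h <_W h ⊔ g <_W h ⊔ f. -/

import Mathlib

namespace WeihrauchPaper

/-- Baire space ℕ^ℕ. -/
abbrev Baire : Type := ℕ → ℕ

/-- Prepend a natural number to an element of Baire space: `(cons e q) 0 = e`, `(cons e q) (n+1) = q n`. -/
def cons (e : ℕ) (q : Baire) : Baire
  | 0 => e
  | n + 1 => q n

/-- Pairing of two elements of Baire space by interleaving. -/
def pair (p q : Baire) : Baire := fun n => if n % 2 = 0 then p (n / 2) else q (n / 2)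

def left (x : Baire) : Baire := fun n => x (2 * n)
def right (x : Baire) : Baire := fun n => x (2 * n + 1)

/-- The finite initial segment of `p` of length `k`. -/
def pref (p : Baire) (k : ℕ) : List ℕ := List.ofFn fun i : Fin k => p i

/-- Result of running the `e`-th partial computable function on the pair
(code of the length-`k` prefix of `p`, input `n`). -/
def query (e : ℕ) (p : Baire) (k n : ℕ) : Part ℕ :=
  Nat.Partrec.Code.eval (Denumerable.ofNat Nat.Partrec.Code e)
    (Nat.pair (Encodable.encode (pref p k)) n)

/-- `FEval e p q` : the `e`-th partial computable functional on Baire space, applied to `p`,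
is defined and equals `q`.  The value at `n` is obtained from the least prefix length `k`
on which the computation converges, which makes the functional single-valued. -/
def FEval (e : ℕ) (p q : Baire) : Prop :=
  ∀ n, ∃ k, query e p k n = Part.some (q n) ∧ ∀ k' < k, ¬ (query e p k' n).Dom

/-- Turing reducibility on Baire space: `q ≤_T p` iff `q = Φ_e(p)` for some `e`. -/
def TuringLE (q p : Baire) : Prop := ∃ e, FEval e p q

/-- Medvedev reducibility: `A ≤_M B` iff some partial computable functional is defined on all
of `B` and maps `B` into `A`. -/
def MedLE (A B : Set Baire) : Prop := ∃ e, ∀ q ∈ B, ∃ p, FEval e q p ∧ p ∈ A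

def MedEquiv (A B : Set Baire) : Prop := MedLE A B ∧ MedLE B A

def MedLT (A B : Set Baire) : Prop := MedLE A B ∧ ¬ MedLE B A

/-- The meet `P ∧ Q := 0⌢P ∪ 1⌢Q` in the Medvedev degrees. -/
def medMeet (P Q : Set Baire) : Set Baire := (cons 0 '' P) ∪ (cons 1 '' Q)

/-- `Succ p = { e⌢q : Φ_e(q) = p and q ≰_T p }`. -/
def Succ (p : Baire) : Set Baire :=
  {x | ∃ e q, x = cons e q ∧ FEval e q p ∧ ¬ TuringLE q p}

/-- A problem (partial multi-valued function on Baire space), represented as the map sending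
an instance to its (possibly empty) set of solutions. -/
abbrev Problem : Type := Baire → Set Baire

/-- The domain of a problem: the instances having at least one solution. -/
def dom (f : Problem) : Set Baire := {x | (f x).Nonempty}

/-- Weihrauch reducibility `f ≤_W g`. -/
def WLE (f g : Problem) : Prop :=
  ∃ eΦ eΨ, ∀ p ∈ dom f, ∃ p', FEval eΦ p p' ∧ p' ∈ dom g ∧
    ∀ q ∈ g p', ∃ r, FEval eΨ (pair p q) r ∧ r ∈ f p

def WEquiv (f g : Problem) : Prop := WLE f g ∧ WLE g f

def WLT (f g : Problem) : Prop := WLE f g ∧ ¬ WLE g f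

/-- The identity on Baire space, as a problem. -/
def idB : Problem := fun p => {p}

/-- The restriction of the identity to `X ⊆ ℕ^ℕ`, as a problem. -/
def idRestrict (X : Set Baire) : Problem := fun p => {q | p ∈ X ∧ q = p}

/-- The join `f ⊔ g`, with domain `{0}×dom f ∪ {1}×dom g` (coded via `cons`). -/
def join (f g : Problem) : Problem := fun x =>
  if x 0 = 0 then f (fun n => x (n + 1))
  else if x 0 = 1 then g (fun n => x (n + 1))
  else ∅

/-- The meet `f ⊓ g`, with domain `dom f × dom g` (coded via `pair`) and
`(f ⊓ g)(x,z) = {0}×f(x) ∪ {1}×g(z)` (coded via `cons`). -/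
def meet (f g : Problem) : Problem := fun x =>
  {y | left x ∈ dom f ∧ right x ∈ dom g ∧
    ((∃ z ∈ f (left x), y = cons 0 z) ∨ (∃ z ∈ g (right x), y = cons 1 z))}

/-- The constant sequence with value `n`. -/
def const (n : ℕ) : Baire := fun _ => n

/-- The characteristic function of `D ⊆ ℕ` as a problem: defined on the constant sequences,
with `χ_D(n)` the constantly-1 sequence if `n ∈ D` and the constantly-0 sequence otherwise. -/
def chi (D : Set ℕ) : Problem := fun x =>
  {y | ∃ n, x = const n ∧ ((n ∈ D ∧ y = const 1) ∨ (n ∉ D ∧ y = const 0))}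

/-- The set of non-computable elements of Baire space. -/
def NR : Set Baire := {q | ¬ Computable q}

/-- `f` is a minimal cover of `h` in the Weihrauch degrees. -/
def MinimalCover (f h : Problem) : Prop :=
  WLT h f ∧ ¬ ∃ g, WLT h g ∧ WLT g f

/-- `f` is a strong minimal cover of `h` in the Weihrauch degrees. -/
def StrongMinimalCover (f h : Problem) : Prop :=
  WLT h f ∧ ∀ g, WLT g f → WLE g h


/-! ### Auxiliary machinery -/

section Aux

open Nat.Partrec (Code)

/-- prefix entries -/
lemma pref_get? (p : Baire) (k n : ℕ) :
    (pref p k)[n]? = if n < k then some (p n) else none := by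
  unfold pref
  by_cases h : n < k <;> simp [h]

lemma pref_getD (p : Baire) {k n : ℕ} (h : n < k) : (pref p k).getD n 0 = p n := by
  rw [List.getD_eq_getElem?_getD, pref_get?, if_pos h]
  rfl

lemma pref_length (p : Baire) (k : ℕ) : (pref p k).length = k := by
  simp [pref]

lemma left_pair (p q : Baire) : left (pair p q) = p := by
  funext n; simp [left, pair, Nat.mul_div_cancel_left, Nat.mul_mod_right]

lemma right_pair (p q : Baire) : right (pair p q) = q := by
  funext n
  have h1 : (2 * n + 1) % 2 = 1 := by omega
  have h2 : (2 * n + 1) / 2 = n := by omega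
  simp [right, pair, h1, h2]

lemma pair_left_right (y : Baire) : pair (left y) (right y) = y := by
  funext m
  by_cases h : m % 2 = 0
  · have : 2 * (m / 2) = m := by omega
    simp [pair, h, left, this]
  · have : 2 * (m / 2) + 1 = m := by omega
    simp [pair, h, right, this]

lemma pair_apply_zero (p q : Baire) : pair p q 0 = p 0 := by simp [pair]

lemma shift_cons (a : ℕ) (p : Baire) : (fun n => cons a p (n + 1)) = p := rfl

lemma cons_shift {w : Baire} : cons (w 0) (fun n => w (n + 1)) = w := by
  funext m; cases m <;> rfl

lemma const_injective {m n : ℕ} (h : const m = const n) : m = n := congrFun h 0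

/-- `FEval` is single-valued. -/
lemma FEval_unique {e : ℕ} {p v v' : Baire} (h : FEval e p v) (h' : FEval e p v') : v = v' := by
  funext n
  obtain ⟨k, hk, hmin⟩ := h n
  obtain ⟨k', hk', hmin'⟩ := h' n
  have hkk : k = k' := by
    rcases lt_trichotomy k k' with hlt | heq | hgt
    · exact absurd (by rw [hk]; trivial) (hmin' _ hlt)
    · exact heq
    · exact absurd (by rw [hk']; trivial) (hmin _ hgt)
  rw [hkk, hk'] at hk
  exact (Part.some_injective hk).symm ▸ rfl

end Aux
section CodeMachinery

open Nat.Partrec (Code)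

lemma query_encode (c : Code) (p : Baire) (k n : ℕ) :
    query (Encodable.encode c) p k n
      = c.eval (Nat.pair (Encodable.encode (pref p k)) n) := by
  simp [query, Denumerable.ofNat_encode]

/-- Build a code from a computable `Option`-valued function of the prefix. -/
lemma exists_opt_code (G : List ℕ → ℕ → Option ℕ) (hG : Computable₂ G) :
    ∃ e, ∀ p k n, query e p k n = Part.ofOption (G (pref p k) n) := by
  have hO : Computable fun m : ℕ =>
      (Encodable.decode (α := List ℕ) m.unpair.1).bind fun l => G l m.unpair.2 := by
    apply Computable.option_bind
    · exact Computable.decode.comp (Computable.fst.comp Computable.unpair)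
    · exact hG.comp Computable.snd
        (Computable.snd.comp (Computable.unpair.comp Computable.fst))
  have hF : Nat.Partrec fun m : ℕ => Part.ofOption
      ((Encodable.decode (α := List ℕ) m.unpair.1).bind fun l => G l m.unpair.2) :=
    Partrec.nat_iff.1 hO.ofOption
  obtain ⟨c, hc⟩ := Nat.Partrec.Code.exists_code.1 hF
  refine ⟨Encodable.encode c, fun p k n => ?_⟩
  rw [query_encode, hc]
  simp [Nat.unpair_pair, Encodable.encodek]

lemma FEval_opt {e : ℕ} {G : List ℕ → ℕ → Option ℕ}
    (he : ∀ p k n, query e p k n = Part.ofOption (G (pref p k) n))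
    {p v : Baire}
    (hv : ∀ n, ∃ k, G (pref p k) n = some (v n) ∧ ∀ k' < k, G (pref p k') n = none) :
    FEval e p v := by
  intro n
  obtain ⟨k, hk, hmin⟩ := hv n
  refine ⟨k, ?_, fun k' hk' => ?_⟩
  · rw [he, hk]; rfl
  · rw [he, hmin k' hk']
    simp [Part.ofOption_dom]

/-- Build a code which transforms the prefix by `τ`, applies code `c₀` and
reindexes the argument by `σ`. -/
lemma exists_trans_code (c₀ : Code) (τ : List ℕ → List ℕ) (hτ : Computable τ)
    (σ : ℕ → ℕ) (hσ : Computable σ) :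
    ∃ e, ∀ p k n, query e p k n
      = c₀.eval (Nat.pair (Encodable.encode (τ (pref p k))) (σ n)) := by
  have hO : Computable fun m : ℕ =>
      (Encodable.decode (α := List ℕ) m.unpair.1).map fun l =>
        Nat.pair (Encodable.encode (τ l)) (σ m.unpair.2) := by
    apply Computable.option_map
    · exact Computable.decode.comp (Computable.fst.comp Computable.unpair)
    · exact Computable₂.comp Primrec₂.natPair.to_comp
        (Computable.encode.comp (hτ.comp Computable.snd))
        (hσ.comp (Computable.snd.comp (Computable.unpair.comp Computable.fst)))
  have hev : Partrec fun m : ℕ × ℕ => c₀.eval m.2 :=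
    Nat.Partrec.Code.eval_part.comp (Computable.const c₀) Computable.snd
  have hF : Partrec fun m : ℕ =>
      (Part.ofOption ((Encodable.decode (α := List ℕ) m.unpair.1).map fun l =>
        Nat.pair (Encodable.encode (τ l)) (σ m.unpair.2))).bind fun idx => c₀.eval idx := by
    exact hO.ofOption.bind (hev.comp (Computable.fst.pair Computable.snd)).to₂
  obtain ⟨c, hc⟩ := Nat.Partrec.Code.exists_code.1 (Partrec.nat_iff.1 hF)
  refine ⟨Encodable.encode c, fun p k n => ?_⟩
  rw [query_encode, hc]
  simp [Nat.unpair_pair, Encodable.encodek, Part.ofOption]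

end CodeMachinery
section Transfer

open Nat.Partrec (Code)

/-- Transform a prefix pointwise via `t`. -/
def tauL (t : List ℕ → ℕ → ℕ) (l : List ℕ) : List ℕ := (List.range l.length).map (t l)

lemma tauL_primrec {t : List ℕ → ℕ → ℕ} (ht : Primrec₂ t) : Primrec (tauL t) :=
  Primrec.list_map (Primrec.list_range.comp Primrec.list_length) ht

lemma tauL_pref {t : List ℕ → ℕ → ℕ} {T : Baire → Baire}
    (hsync : ∀ p k m, m < k → t (pref p k) m = T p m) (p : Baire) (k : ℕ) :
    tauL t (pref p k) = pref (T p) k := by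
  apply List.ext_getElem?
  intro n
  rw [pref_get?]
  rcases lt_or_ge n k with h | h
  · rw [if_pos h]
    rw [tauL, List.getElem?_map]
    rw [List.getElem?_range (by simpa [pref_length] using h)]
    simp [hsync p k n h]
  · rw [if_neg (by omega)]
    apply List.getElem?_eq_none_iff.2
    simp [tauL, pref_length]; omega

lemma transfer_FEval {e a : ℕ} {P : Baire} {σ : ℕ → ℕ} {p : Baire}
    (he : ∀ k n, query e p k n = query a P k (σ n))
    {v : Baire} (hv : FEval a P v) : FEval e p (fun n => v (σ n)) := by
  intro n
  obtain ⟨k, hk, hmin⟩ := hv (σ n)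
  exact ⟨k, by rw [he]; exact hk, fun k' h => by rw [he]; exact hmin k' h⟩

/-- Oracle-side transfer: if `T` is prefix-computable with modulus `≤ k`, then
any functional applied to `T p` can be simulated from `p`, with argument reindexing. -/
lemma exists_transfer (a : ℕ) (t : List ℕ → ℕ → ℕ) (ht : Primrec₂ t)
    (T : Baire → Baire) (hsync : ∀ p k m, m < k → t (pref p k) m = T p m)
    (σ : ℕ → ℕ) (hσ : Computable σ) :
    ∃ e, ∀ p v, FEval a (T p) v → FEval e p (fun n => v (σ n)) := by
  obtain ⟨e, he⟩ := exists_trans_code (Denumerable.ofNat Code a) (tauL t)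
    (tauL_primrec ht).to_comp σ hσ
  refine ⟨e, fun p v hv => ?_⟩
  refine transfer_FEval (fun k n => ?_) hv
  rw [he, tauL_pref hsync]
  rfl

/-- even-position entries: prefix of `left y` from prefix of `y`. -/
def evens (l : List ℕ) : List ℕ := (List.range ((l.length + 1) / 2)).map fun i => l.getD (2 * i) 0

lemma evens_primrec : Primrec evens := by
  apply Primrec.list_map
  · exact Primrec.list_range.comp (Primrec.nat_div.comp
      (Primrec.succ.comp Primrec.list_length) (Primrec.const 2))
  · exact ((Primrec.list_getD 0).comp Primrec.fst
      (Primrec.nat_mul.comp (Primrec.const 2) Primrec.snd)).to₂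

lemma evens_pref (y : Baire) (k : ℕ) : evens (pref y k) = pref (left y) ((k + 1) / 2) := by
  apply List.ext_getElem?
  intro n
  rw [pref_get?]
  rcases lt_or_ge n ((k + 1) / 2) with h | h
  · rw [if_pos h]
    rw [evens, List.getElem?_map, List.getElem?_range (by simpa [pref_length] using h)]
    have h2 : 2 * n < k := by omega
    simp only [Option.map_some]
    rw [pref_getD y h2]
    rfl
  · rw [if_neg (by omega)]
    apply List.getElem?_eq_none_iff.2
    simp [evens, pref_length]; omega

lemma transfer_half {e b : ℕ} {P y : Baire}
    (he : ∀ k n, query e y k n = query b P ((k + 1) / 2) n)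
    {v : Baire} (hv : FEval b P v) : FEval e y v := by
  intro n
  obtain ⟨K, hK, hmin⟩ := hv n
  by_cases h0 : K = 0
  · subst h0
    exact ⟨0, by rw [he]; exact hK, fun k' hk' => absurd hk' (by omega)⟩
  · refine ⟨2 * K - 1, ?_, fun k' hk' => ?_⟩
    · rw [he]
      have : (2 * K - 1 + 1) / 2 = K := by omega
      rw [this]; exact hK
    · rw [he]
      apply hmin
      omega

/-- Transfer where the source oracle is `pair p q` and target is `T p`. -/
lemma exists_transfer_pair (b : ℕ) (t : List ℕ → ℕ → ℕ) (ht : Primrec₂ t)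
    (T : Baire → Baire) (hsync : ∀ p k m, m < k → t (pref p k) m = T p m) :
    ∃ e, ∀ y v, FEval b (T (left y)) v → FEval e y v := by
  obtain ⟨e, he⟩ := exists_trans_code (Denumerable.ofNat Code b)
    (fun l => tauL t (evens l)) ((tauL_primrec ht).to_comp.comp evens_primrec.to_comp)
    id Computable.id
  refine ⟨e, fun y v hv => ?_⟩
  refine transfer_half (fun k n => ?_) hv
  rw [he, evens_pref, tauL_pref hsync]
  rfl

/-- A code computing `T p` from `p` directly. -/
lemma exists_alpha (t : List ℕ → ℕ → ℕ) (ht : Primrec₂ t)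
    (T : Baire → Baire) (hsync : ∀ p k m, m < k → t (pref p k) m = T p m) :
    ∃ e, ∀ p, FEval e p (T p) := by
  obtain ⟨e, he⟩ := exists_opt_code (fun l i => (tauL t l)[i]?)
    ((Primrec.list_getElem?.comp ((tauL_primrec ht).comp Primrec.fst) Primrec.snd).to₂.to_comp)
  refine ⟨e, fun p => ?_⟩
  apply FEval_opt (G := fun l i => (tauL t l)[i]?) he
  intro n
  refine ⟨n + 1, ?_, fun k' hk' => ?_⟩
  · rw [tauL_pref hsync, pref_get?, if_pos (by omega)]
  · rw [tauL_pref hsync, pref_get?, if_neg (by omega)]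

end Transfer
section Shapes

lemma pref_getD2 (p : Baire) {k n : ℕ} (h : n < k) : (pref p k)[n]?.getD 0 = p n := by
  rw [← List.getD_eq_getElem?_getD, pref_getD p h]

lemma cons_eq (a : ℕ) (q : Baire) (m : ℕ) : cons a q m = if m = 0 then a else q (m - 1) := by
  cases m <;> simp [cons]

/- primrec helpers on `List ℕ × ℕ` -/
private lemma pgetD {φ : ℕ → ℕ} (hφ : Primrec φ) :
    Primrec fun a : List ℕ × ℕ => a.1.getD (φ a.2) 0 :=
  (Primrec.list_getD 0).comp Primrec.fst (hφ.comp Primrec.snd)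

private lemma pceq {φ : ℕ → ℕ} (hφ : Primrec φ) (c : ℕ) :
    PrimrecPred fun a : List ℕ × ℕ => φ a.2 = c :=
  Primrec.eq.comp (hφ.comp Primrec.snd) (Primrec.const c)

private lemma pmod2 : Primrec fun m : ℕ => m % 2 :=
  Primrec.nat_mod.comp Primrec.id (Primrec.const 2)

private lemma pdiv2 : Primrec fun m : ℕ => m / 2 :=
  Primrec.nat_div.comp Primrec.id (Primrec.const 2)

private lemma psub (c : ℕ) : Primrec fun m : ℕ => m - c :=
  Primrec.nat_sub.comp Primrec.id (Primrec.const c)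

/- shape `T0 n p = pair p (const n)` -/
def t0 (n : ℕ) : List ℕ → ℕ → ℕ := fun l m => if m % 2 = 0 then l.getD (m / 2) 0 else n

lemma t0_primrec (n : ℕ) : Primrec₂ (t0 n) :=
  (Primrec.ite (pceq pmod2 0) (pgetD pdiv2) (Primrec.const n)).to₂

lemma sync0 (n : ℕ) : ∀ p k m, m < k → t0 n (pref p k) m = pair p (const n) m := by
  intro p k m hm
  unfold t0 pair const
  by_cases h : m % 2 = 0 <;> simp [h, pref_getD2 p (show m / 2 < k by omega)]

/- shape `T1 n y = pair (pair (left y) (const n)) (right y)` -/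
def t1 (n : ℕ) : List ℕ → ℕ → ℕ := fun l m =>
  if m % 2 = 1 then l.getD m 0 else if (m / 2) % 2 = 0 then l.getD (m / 2) 0 else n

lemma t1_primrec (n : ℕ) : Primrec₂ (t1 n) :=
  (Primrec.ite (pceq pmod2 1) (pgetD Primrec.id)
    (Primrec.ite (pceq (pmod2.comp pdiv2) 0) (pgetD pdiv2) (Primrec.const n))).to₂

lemma sync1 (n : ℕ) : ∀ y k m, m < k →
    t1 n (pref y k) m = pair (pair (left y) (const n)) (right y) m := by
  intro y k m hm
  unfold t1 pair const left right
  by_cases h : m % 2 = 1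
  · have h2 : ¬ m % 2 = 0 := by omega
    have h3 : 2 * (m / 2) + 1 = m := by omega
    simp [h, h2, h3, pref_getD2 y (show m < k by omega)]
  · have h2 : m % 2 = 0 := by omega
    by_cases h4 : (m / 2) % 2 = 0
    · have h5 : 2 * (m / 2 / 2) = m / 2 := by omega
      simp [h, h2, h4, h5, pref_getD2 y (show m / 2 < k by omega)]
    · simp [h, h2, h4]

/- shape `T2 n p = cons 1 (pair p (const n))` -/
def t2 (n : ℕ) : List ℕ → ℕ → ℕ := fun l m =>
  if m = 0 then 1 else if (m - 1) % 2 = 0 then l.getD ((m - 1) / 2) 0 else n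

lemma t2_primrec (n : ℕ) : Primrec₂ (t2 n) :=
  (Primrec.ite (pceq Primrec.id 0) (Primrec.const 1)
    (Primrec.ite (pceq (pmod2.comp (psub 1)) 0) (pgetD (pdiv2.comp (psub 1)))
      (Primrec.const n))).to₂

lemma sync2 (n : ℕ) : ∀ p k m, m < k →
    t2 n (pref p k) m = cons 1 (pair p (const n)) m := by
  intro p k m hm
  unfold t2
  rw [cons_eq]
  by_cases h0 : m = 0
  · simp [h0]
  · rw [if_neg h0, if_neg h0]
    unfold pair const
    by_cases h : (m - 1) % 2 = 0 <;>
      simp [h, pref_getD2 p (show (m - 1) / 2 < k by omega)]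

/- shape `T3 n y = pair (cons 1 (pair (left y) (const n))) (right y)` -/
def t3 (n : ℕ) : List ℕ → ℕ → ℕ := fun l m =>
  if m % 2 = 1 then l.getD m 0
  else if m = 0 then 1
  else if (m / 2 - 1) % 2 = 0 then l.getD (m / 2 - 1) 0 else n

lemma t3_primrec (n : ℕ) : Primrec₂ (t3 n) :=
  (Primrec.ite (pceq pmod2 1) (pgetD Primrec.id)
    (Primrec.ite (pceq Primrec.id 0) (Primrec.const 1)
      (Primrec.ite (pceq (pmod2.comp (psub 1 |>.comp pdiv2)) 0)
        (pgetD (psub 1 |>.comp pdiv2)) (Primrec.const n)))).to₂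

lemma sync3 (n : ℕ) : ∀ y k m, m < k →
    t3 n (pref y k) m = pair (cons 1 (pair (left y) (const n))) (right y) m := by
  intro y k m hm
  unfold t3 pair
  by_cases h : m % 2 = 1
  · have h2 : ¬ m % 2 = 0 := by omega
    have h3 : 2 * (m / 2) + 1 = m := by omega
    simp [h, h2, right, h3, pref_getD2 y (show m < k by omega)]
  · have h2 : m % 2 = 0 := by omega
    rw [if_neg h, if_pos h2, cons_eq]
    by_cases h0 : m = 0
    · simp [h0]
    · have hm2 : ¬ m / 2 = 0 := by omega
      rw [if_neg h0, if_neg hm2]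
      unfold const left
      by_cases h4 : (m / 2 - 1) % 2 = 0
      · have h5 : 2 * ((m / 2 - 1) / 2) = m / 2 - 1 := by omega
        simp [h4, h5, pref_getD2 y (show m / 2 - 1 < k by omega)]
      · simp [h4]

/- shape `T4 p = cons 1 p` -/
def t4 : List ℕ → ℕ → ℕ := fun l m => if m = 0 then 1 else l.getD (m - 1) 0

lemma t4_primrec : Primrec₂ t4 :=
  (Primrec.ite (pceq Primrec.id 0) (Primrec.const 1) (pgetD (psub 1))).to₂

lemma sync4 : ∀ p k m, m < k → t4 (pref p k) m = cons 1 p m := by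
  intro p k m hm
  unfold t4
  rw [cons_eq]
  by_cases h0 : m = 0
  · simp [h0]
  · simp [h0, pref_getD2 p (show m - 1 < k by omega)]

/- shape `T5 y = pair (cons 1 (left y)) (right y)` -/
def t5 : List ℕ → ℕ → ℕ := fun l m =>
  if m % 2 = 1 then l.getD m 0 else if m = 0 then 1 else l.getD (m - 2) 0

lemma t5_primrec : Primrec₂ t5 :=
  (Primrec.ite (pceq pmod2 1) (pgetD Primrec.id)
    (Primrec.ite (pceq Primrec.id 0) (Primrec.const 1) (pgetD (psub 2)))).to₂

lemma sync5 : ∀ y k m, m < k → t5 (pref y k) m = pair (cons 1 (left y)) (right y) m := by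
  intro y k m hm
  unfold t5 pair
  by_cases h : m % 2 = 1
  · have h2 : ¬ m % 2 = 0 := by omega
    have h3 : 2 * (m / 2) + 1 = m := by omega
    simp [h, h2, right, h3, pref_getD2 y (show m < k by omega)]
  · have h2 : m % 2 = 0 := by omega
    rw [if_neg h, if_pos h2, cons_eq]
    by_cases h0 : m = 0
    · simp [h0]
    · have hm2 : ¬ m / 2 = 0 := by omega
      have h5 : 2 * (m / 2 - 1) = m - 2 := by omega
      simp [h0, hm2, left, h5, pref_getD2 y (show m - 2 < k by omega)]

/- shape `T6 ε p = pair p (cons 1 (const ε))` -/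
def t6 (ε : ℕ) : List ℕ → ℕ → ℕ := fun l m =>
  if m % 2 = 0 then l.getD (m / 2) 0 else if m = 1 then 1 else ε

lemma t6_primrec (ε : ℕ) : Primrec₂ (t6 ε) :=
  (Primrec.ite (pceq pmod2 0) (pgetD pdiv2)
    (Primrec.ite (pceq Primrec.id 1) (Primrec.const 1) (Primrec.const ε))).to₂

lemma sync6 (ε : ℕ) : ∀ p k m, m < k → t6 ε (pref p k) m = pair p (cons 1 (const ε)) m := by
  intro p k m hm
  unfold t6 pair
  by_cases h : m % 2 = 0
  · simp [h, pref_getD2 p (show m / 2 < k by omega)]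
  · rw [if_neg h, if_neg h, cons_eq]
    by_cases h1 : m = 1
    · simp [h1]
    · have hd : ¬ m / 2 = 0 := by omega
      simp [h1, hd, const]

/- shape `T7 ε p = pair (cons 1 p) (cons 1 (const ε))` -/
def t7 (ε : ℕ) : List ℕ → ℕ → ℕ := fun l m =>
  if m % 2 = 0 then (if m = 0 then 1 else l.getD (m / 2 - 1) 0)
  else if m = 1 then 1 else ε

lemma t7_primrec (ε : ℕ) : Primrec₂ (t7 ε) :=
  (Primrec.ite (pceq pmod2 0)
    (Primrec.ite (pceq Primrec.id 0) (Primrec.const 1) (pgetD (psub 1 |>.comp pdiv2)))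
    (Primrec.ite (pceq Primrec.id 1) (Primrec.const 1) (Primrec.const ε))).to₂

lemma sync7 (ε : ℕ) : ∀ p k m, m < k →
    t7 ε (pref p k) m = pair (cons 1 p) (cons 1 (const ε)) m := by
  intro p k m hm
  unfold t7 pair
  by_cases h : m % 2 = 0
  · rw [if_pos h, if_pos h, cons_eq]
    by_cases h0 : m = 0
    · simp [h0]
    · have hd : ¬ m / 2 = 0 := by omega
      simp [h0, hd, pref_getD2 p (show m / 2 - 1 < k by omega)]
  · rw [if_neg h, if_neg h, cons_eq]
    by_cases h1 : m = 1
    · simp [h1]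
    · have hd : ¬ m / 2 = 0 := by omega
      simp [h1, hd, const]

end Shapes
section ConcreteCodes

private lemma pget? {φ : ℕ → ℕ} (hφ : Primrec φ) :
    Primrec fun a : List ℕ × ℕ => a.1[(φ a.2)]? :=
  Primrec.list_getElem?.comp Primrec.fst (hφ.comp Primrec.snd)

private lemma pmul2 : Primrec fun m : ℕ => 2 * m :=
  Primrec.nat_mul.comp (Primrec.const 2) Primrec.id

private lemma pmul2add1 : Primrec fun m : ℕ => 2 * m + 1 :=
  Primrec.succ.comp pmul2

/-- code computing `left p` from `p` -/
lemma exists_eL : ∃ e, ∀ p : Baire, FEval e p (left p) := by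
  obtain ⟨e, he⟩ := exists_opt_code (fun l i => l[(2 * i)]?) ((pget? pmul2).to₂.to_comp)
  refine ⟨e, fun p => FEval_opt (G := fun l i => l[(2 * i)]?) he fun n => ?_⟩
  refine ⟨2 * n + 1, ?_, fun k' hk' => ?_⟩
  · rw [pref_get?, if_pos (by omega)]; rfl
  · rw [pref_get?, if_neg (by omega)]

/-- code computing `right p` from `p` -/
lemma exists_eR : ∃ e, ∀ p : Baire, FEval e p (right p) := by
  obtain ⟨e, he⟩ := exists_opt_code (fun l i => l[(2 * i + 1)]?) ((pget? pmul2add1).to₂.to_comp)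
  refine ⟨e, fun p => FEval_opt (G := fun l i => l[(2 * i + 1)]?) he fun n => ?_⟩
  refine ⟨2 * n + 2, ?_, fun k' hk' => ?_⟩
  · rw [pref_get?, if_pos (by omega)]; rfl
  · rw [pref_get?, if_neg (by omega)]

/-- code computing `cons 0 p` from `p` -/
lemma exists_eC0 : ∃ e, ∀ p : Baire, FEval e p (cons 0 p) := by
  obtain ⟨e, he⟩ := exists_opt_code (fun l i => if i = 0 then some 0 else l[(i - 1)]?)
    ((Primrec.ite (pceq Primrec.id 0) (Primrec.const (some 0)) (pget? (psub 1))).to₂.to_comp)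
  refine ⟨e, fun p => FEval_opt (G := fun l i => if i = 0 then some 0 else l[(i - 1)]?)
    he fun n => ?_⟩
  rcases n with _ | j
  · exact ⟨0, by simp [cons], fun k' hk' => by omega⟩
  · refine ⟨j + 1, ?_, fun k' hk' => ?_⟩
    · rw [if_neg (by omega)]
      simp only [Nat.add_sub_cancel]
      rw [pref_get?, if_pos (by omega)]
      rfl
    · rw [if_neg (by omega)]
      simp only [Nat.add_sub_cancel]
      rw [pref_get?]
      rw [if_neg (by omega)]

/-- code computing `cons 0 (right p)` from `p` -/
lemma exists_eC0R : ∃ e, ∀ p : Baire, FEval e p (cons 0 (right p)) := by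
  obtain ⟨e, he⟩ := exists_opt_code
    (fun l i => if i = 0 then some 0 else l[(2 * (i - 1) + 1)]?)
    ((Primrec.ite (pceq Primrec.id 0) (Primrec.const (some 0))
      (pget? (pmul2add1.comp (psub 1)))).to₂.to_comp)
  refine ⟨e, fun p => FEval_opt
    (G := fun l i => if i = 0 then some 0 else l[(2 * (i - 1) + 1)]?) he fun n => ?_⟩
  rcases n with _ | j
  · exact ⟨0, by simp [cons], fun k' hk' => by omega⟩
  · refine ⟨2 * j + 2, ?_, fun k' hk' => ?_⟩
    · rw [if_neg (by omega)]
      simp only [Nat.add_sub_cancel]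
      rw [pref_get?, if_pos (by omega)]
      rfl
    · rw [if_neg (by omega)]
      simp only [Nat.add_sub_cancel]
      rw [pref_get?]
      rw [if_neg (by omega)]

/-- the forward code for `join h g ≤W join h f` -/
lemma exists_eD1F : ∃ e, ∀ p : Baire,
    (p 0 = 1 → FEval e p (cons 1 (right p))) ∧ (p 0 ≠ 1 → FEval e p p) := by
  obtain ⟨e, he⟩ := exists_opt_code
    (fun l i => (l[0]?).bind fun b0 =>
      if b0 = 1 then (if i = 0 then some 1 else l[(2 * i - 1)]?) else l[i]?)
    (by
      refine Primrec.to_comp ?_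
      show Primrec fun a : List ℕ × ℕ => (a.1[0]?).bind fun b0 =>
        if b0 = 1 then (if a.2 = 0 then some 1 else a.1[(2 * a.2 - 1)]?) else a.1[a.2]?
      apply Primrec.option_bind (pget? (Primrec.const 0))
      exact Primrec.to₂ (Primrec.ite (Primrec.eq.comp Primrec.snd (Primrec.const 1))
        (Primrec.ite (Primrec.eq.comp (Primrec.snd.comp Primrec.fst) (Primrec.const 0))
          (Primrec.const (some 1))
          (Primrec.list_getElem?.comp (Primrec.fst.comp Primrec.fst)
            ((psub 1).comp (pmul2.comp (Primrec.snd.comp Primrec.fst)))))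
        (Primrec.list_getElem?.comp (Primrec.fst.comp Primrec.fst)
          (Primrec.snd.comp Primrec.fst))))
  refine ⟨e, fun p => ⟨fun hp1 => FEval_opt (G := fun l i => (l[0]?).bind fun b0 =>
      if b0 = 1 then (if i = 0 then some 1 else l[(2 * i - 1)]?) else l[i]?)
      he fun n => ?_, fun hp0 => FEval_opt (G := fun l i => (l[0]?).bind fun b0 =>
      if b0 = 1 then (if i = 0 then some 1 else l[(2 * i - 1)]?) else l[i]?)
      he fun n => ?_⟩⟩
  · rcases n with _ | j
    · refine ⟨1, ?_, fun k' hk' => ?_⟩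
      · rw [pref_get?, if_pos (by omega)]
        simp only [Option.bind_some]
        rw [if_pos hp1]
        simp [cons]
      · have hk0 : k' = 0 := by omega
        subst hk0
        rw [pref_get?, if_neg (by omega)]
        rfl
    · refine ⟨2 * j + 2, ?_, fun k' hk' => ?_⟩
      · rw [pref_get?, if_pos (by omega)]
        simp only [Option.bind_some]
        rw [if_pos hp1, if_neg (Nat.succ_ne_zero j)]
        have h5 : 2 * (j + 1) - 1 = 2 * j + 1 := by omega
        rw [h5, pref_get?]
        rw [if_pos (by omega)]
        rfl
      · rcases Nat.eq_zero_or_pos k' with h0 | h0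
        · subst h0; rw [pref_get?, if_neg (by omega)]; rfl
        · rw [pref_get?, if_pos (by omega)]
          simp only [Option.bind_some]
          rw [if_pos hp1, if_neg (Nat.succ_ne_zero j)]
          have h5 : 2 * (j + 1) - 1 = 2 * j + 1 := by omega
          rw [h5, pref_get?]
          rw [if_neg (by omega)]
  · rcases n with _ | j
    · refine ⟨1, ?_, fun k' hk' => ?_⟩
      · rw [pref_get?, if_pos (by omega)]
        simp only [Option.bind_some]
        rw [if_neg hp0]
      · have hk0 : k' = 0 := by omega
        subst hk0
        rw [pref_get?, if_neg (by omega)]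
        rfl
    · refine ⟨j + 2, ?_, fun k' hk' => ?_⟩
      · rw [pref_get?, if_pos (by omega)]
        simp only [Option.bind_some]
        rw [if_neg hp0, pref_get?]
        rw [if_pos (by omega)]
      · rcases Nat.eq_zero_or_pos k' with h0 | h0
        · subst h0; rw [pref_get?, if_neg (by omega)]; rfl
        · rw [pref_get?, if_pos (by omega)]
          simp only [Option.bind_some]
          rw [if_neg hp0, pref_get?]
          rw [if_neg (by omega)]

/-- the backward code for `join h g ≤W join h f` -/
lemma exists_eD1B : ∃ e, ∀ p : Baire,
    (p 0 = 0 → FEval e p (right p)) ∧ (p 0 ≠ 0 → FEval e p (cons 0 (right p))) := by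
  obtain ⟨e, he⟩ := exists_opt_code
    (fun l i => (l[0]?).bind fun b0 =>
      if b0 = 0 then l[(2 * i + 1)]? else (if i = 0 then some 0 else l[(2 * i - 1)]?))
    (by
      refine Primrec.to_comp ?_
      show Primrec fun a : List ℕ × ℕ => (a.1[0]?).bind fun b0 =>
        if b0 = 0 then a.1[(2 * a.2 + 1)]?
        else (if a.2 = 0 then some 0 else a.1[(2 * a.2 - 1)]?)
      apply Primrec.option_bind (pget? (Primrec.const 0))
      exact Primrec.to₂ (Primrec.ite (Primrec.eq.comp Primrec.snd (Primrec.const 0))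
        (Primrec.list_getElem?.comp (Primrec.fst.comp Primrec.fst)
          (pmul2add1.comp (Primrec.snd.comp Primrec.fst)))
        (Primrec.ite (Primrec.eq.comp (Primrec.snd.comp Primrec.fst) (Primrec.const 0))
          (Primrec.const (some 0))
          (Primrec.list_getElem?.comp (Primrec.fst.comp Primrec.fst)
            ((psub 1).comp (pmul2.comp (Primrec.snd.comp Primrec.fst)))))))
  refine ⟨e, fun p => ⟨fun hp0 => FEval_opt (G := fun l i => (l[0]?).bind fun b0 =>
      if b0 = 0 then l[(2 * i + 1)]? else (if i = 0 then some 0 else l[(2 * i - 1)]?))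
      he fun n => ?_, fun hp1 => FEval_opt (G := fun l i => (l[0]?).bind fun b0 =>
      if b0 = 0 then l[(2 * i + 1)]? else (if i = 0 then some 0 else l[(2 * i - 1)]?))
      he fun n => ?_⟩⟩
  · refine ⟨2 * n + 2, ?_, fun k' hk' => ?_⟩
    · rw [pref_get?, if_pos (by omega)]
      simp only [Option.bind_some]
      rw [if_pos hp0, pref_get?]
      rw [if_pos (by omega)]
      rfl
    · rcases Nat.eq_zero_or_pos k' with h0 | h0
      · subst h0; rw [pref_get?, if_neg (by omega)]; rfl
      · rw [pref_get?, if_pos (by omega)]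
        simp only [Option.bind_some]
        rw [if_pos hp0, pref_get?]
        rw [if_neg (by omega)]
  · rcases n with _ | j
    · refine ⟨1, ?_, fun k' hk' => ?_⟩
      · rw [pref_get?, if_pos (by omega)]
        simp only [Option.bind_some]
        rw [if_neg hp1]
        simp [cons]
      · have hk0 : k' = 0 := by omega
        subst hk0
        rw [pref_get?, if_neg (by omega)]
        rfl
    · refine ⟨2 * j + 2, ?_, fun k' hk' => ?_⟩
      · rw [pref_get?, if_pos (by omega)]
        simp only [Option.bind_some]
        rw [if_neg hp1, if_neg (Nat.succ_ne_zero j)]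
        have h5 : 2 * (j + 1) - 1 = 2 * j + 1 := by omega
        rw [h5, pref_get?]
        rw [if_pos (by omega)]
        rfl
      · rcases Nat.eq_zero_or_pos k' with h0 | h0
        · subst h0; rw [pref_get?, if_neg (by omega)]; rfl
        · rw [pref_get?, if_pos (by omega)]
          simp only [Option.bind_some]
          rw [if_neg hp1, if_neg (Nat.succ_ne_zero j)]
          have h5 : 2 * (j + 1) - 1 = 2 * j + 1 := by omega
          rw [h5, pref_get?]
          rw [if_neg (by omega)]

end ConcreteCodes
section MainConstruction

/-- the instances of our `g`: `pair x (const n)` -/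
def yI (x : Baire) (n : ℕ) : Baire := pair x (const n)

/-- `cons 1` of the above (instances of `join h g` on the `g` side) -/
def zI (x : Baire) (n : ℕ) : Baire := cons 1 (yI x n)

/-- the value `cons 1 (const ε)` is forced by some `h`-solution for the pair `(a,b)` at
instance `w`. -/
def ForcedW (h : Problem) (w : Baire) (a b ε : ℕ) : Prop :=
  ∃ p' q v, FEval a w p' ∧ q ∈ h p' ∧ FEval b (pair w q) v ∧ v = cons 1 (const ε)

/-- the diagonal set `D` -/
def Dset (h : Problem) (x : Baire) : Set ℕ :=
  {m | if (Nat.unpair m).2 = 0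
    then ¬ ForcedW h (yI x m) (Nat.unpair (Nat.unpair m).1).1 (Nat.unpair (Nat.unpair m).1).2 1
    else ¬ ForcedW h (zI x m) (Nat.unpair (Nat.unpair m).1).1 (Nat.unpair (Nat.unpair m).1).2 1}

open Classical in
noncomputable def chiD (h : Problem) (x : Baire) (n : ℕ) : ℕ :=
  if n ∈ Dset h x then 1 else 0

/-- The problem `g` of the main theorem. -/
noncomputable def gP (f h : Problem) (x : Baire) : Problem := meet f (chi (Dset h x))

lemma pair_even (p q : Baire) (n : ℕ) : pair p q (2 * n) = p n := congrFun (left_pair p q) n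

lemma pair_odd (p q : Baire) (n : ℕ) : pair p q (2 * n + 1) = q n := congrFun (right_pair p q) n

lemma join_cons0 (h' g' : Problem) (w : Baire) : join h' g' (cons 0 w) = h' w := by
  simp [join, cons]

lemma join_cons1 (h' g' : Problem) (w : Baire) : join h' g' (cons 1 w) = g' w := by
  simp [join, cons]

lemma join_zero {h' g' : Problem} {w : Baire} (h0 : w 0 = 0) :
    join h' g' w = h' (fun n => w (n + 1)) := by simp [join, h0]

lemma join_one {h' g' : Problem} {w : Baire} (h1 : w 0 = 1) :
    join h' g' w = g' (fun n => w (n + 1)) := by simp [join, h1]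

lemma join_other {h' g' : Problem} {w : Baire} (h0 : w 0 ≠ 0) (h1 : w 0 ≠ 1) :
    join h' g' w = ∅ := by simp [join, h0, h1]

open Classical in
lemma chi_mem_eq {D : Set ℕ} {n : ℕ} {z : Baire} (hz : z ∈ chi D (const n)) :
    z = const (if n ∈ D then 1 else 0) := by
  obtain ⟨m, hm, hc⟩ := hz
  have hmn : n = m := const_injective hm
  subst hmn
  rcases hc with ⟨h1, rfl⟩ | ⟨h1, rfl⟩ <;> simp [h1]

open Classical in
lemma chi_self (D : Set ℕ) (n : ℕ) :
    const (if n ∈ D then 1 else 0) ∈ chi D (const n) := by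
  refine ⟨n, rfl, ?_⟩
  by_cases hn : n ∈ D <;> simp [hn]

lemma chi_dom {D : Set ℕ} {p : Baire} (hp : p ∈ dom (chi D)) : ∃ n, p = const n := by
  obtain ⟨z, n, hn, -⟩ := hp
  exact ⟨n, hn⟩

lemma chiD_self (h : Problem) (x : Baire) (n : ℕ) :
    const (chiD h x n) ∈ chi (Dset h x) (const n) := chi_self _ n

lemma gP_mem {f h : Problem} {x : Baire} (hdom : dom f = {x}) (n : ℕ) (v : Baire) :
    v ∈ gP f h x (yI x n) ↔
      ((∃ z ∈ f x, v = cons 0 z) ∨ v = cons 1 (const (chiD h x n))) := by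
  have hx : x ∈ dom f := by rw [hdom]; rfl
  have hl : left (yI x n) = x := left_pair _ _
  have hr : right (yI x n) = const n := right_pair _ _
  constructor
  · rintro ⟨-, -, h1 | h2⟩
    · obtain ⟨z, hz, rfl⟩ := h1
      rw [hl] at hz
      exact Or.inl ⟨z, hz, rfl⟩
    · obtain ⟨z, hz, rfl⟩ := h2
      rw [hr] at hz
      rw [chi_mem_eq hz]
      exact Or.inr rfl
  · intro hv
    refine ⟨by rw [hl]; exact hx, by rw [hr]; exact ⟨_, chiD_self h x n⟩, ?_⟩
    rcases hv with ⟨z, hz, rfl⟩ | rfl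
    · exact Or.inl ⟨z, by rw [hl]; exact hz, rfl⟩
    · exact Or.inr ⟨const (chiD h x n), by rw [hr]; exact chiD_self h x n, rfl⟩

lemma gP_dom {f h : Problem} {x : Baire} (hdom : dom f = {x}) :
    dom (gP f h x) = {y | ∃ n, y = yI x n} := by
  ext y
  constructor
  · rintro ⟨v, hl, hr, -⟩
    have hlx : left y = x := by rw [hdom] at hl; exact hl
    obtain ⟨n, hn⟩ := chi_dom hr
    refine ⟨n, ?_⟩
    rw [← pair_left_right y, hlx, hn]
    rfl
  · rintro ⟨n, rfl⟩
    exact ⟨cons 1 (const (chiD h x n)), (gP_mem hdom n _).2 (Or.inr rfl)⟩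

/-- helper to rewrite the value of an `FEval`. -/
lemma FEval_ext {e : ℕ} {p q q' : Baire} (h : FEval e p q) (hq : ∀ n, q n = q' n) :
    FEval e p q' := by
  have : q = q' := funext hq
  rwa [this] at h

/-- The key defeat lemma: if the pair `(a,b)` succeeds as a reduction to `h` at instance `w`
with target solution set `g(y_n)`, `v`-values never land in the `cons 0`-side `f x`-solutions
(uniformly), and `n`'s membership in `D` diagonalizes against `ForcedW` at `w`, we get a
contradiction. -/
lemma key_defeat {f h : Problem} {x : Baire} (hdom : dom f = {x}) {w : Baire} {a b n : ℕ}
    (hDn : n ∈ Dset h x ↔ ¬ ForcedW h w a b 1)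
    (hsucc : ∃ p', FEval a w p' ∧ p' ∈ dom h ∧
      ∀ q ∈ h p', ∃ v, FEval b (pair w q) v ∧ v ∈ gP f h x (yI x n))
    (hnoA : ¬ ∃ p', FEval a w p' ∧ p' ∈ dom h ∧
      ∀ q ∈ h p', ∃ v, FEval b (pair w q) v ∧ ∃ z ∈ f x, v = cons 0 z) : False := by
  classical
  obtain ⟨p', hp', hpd, hback⟩ := hsucc
  have hex : ∃ q ∈ h p', ¬ ∃ v, FEval b (pair w q) v ∧ ∃ z ∈ f x, v = cons 0 z := by
    by_contra hc
    push_neg at hc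
    refine hnoA ⟨p', hp', hpd, fun q hq => ?_⟩
    obtain ⟨v, hv1, hv2⟩ := hc q hq
    exact ⟨v, hv1, hv2⟩
  obtain ⟨q0, hq0, hq0f⟩ := hex
  obtain ⟨v0, hv0, hv0g⟩ := hback q0 hq0
  rw [gP_mem hdom] at hv0g
  have hv0c : v0 = cons 1 (const (chiD h x n)) := by
    rcases hv0g with h1 | h2
    · exact absurd ⟨v0, hv0, h1⟩ hq0f
    · exact h2
  have hforced : ForcedW h w a b (chiD h x n) :=
    ⟨p', q0, v0, hp', hq0, hv0, hv0c⟩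
  by_cases hn : n ∈ Dset h x
  · have hχ : chiD h x n = 1 := by simp [chiD, hn]
    exact (hDn.1 hn) (hχ ▸ hforced)
  · have hχ : chiD h x n = 0 := by simp [chiD, hn]
    have hforced1 : ForcedW h w a b 1 := by
      by_contra hf1
      exact hn (hDn.2 hf1)
    obtain ⟨p'', q1, v1, hp'', hq1, hv1, hv1e⟩ := hforced1
    have hpp : p'' = p' := FEval_unique hp'' hp'
    subst hpp
    obtain ⟨v, hv, hvg⟩ := hback q1 hq1
    have hvv : v = v1 := FEval_unique hv hv1
    subst hvv
    rw [gP_mem hdom] at hvg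
    rcases hvg with ⟨z, hz, hze⟩ | h2
    · rw [hv1e] at hze
      have h00 := congrFun hze 0
      simp [cons] at h00
    · rw [hv1e, hχ] at h2
      have h01 := congrFun h2 1
      simp [cons, const] at h01

end MainConstruction
lemma dom_join_zero {h' g' : Problem} {w : Baire} (h0 : w 0 = 0) :
    w ∈ dom (join h' g') ↔ (fun n => w (n + 1)) ∈ dom h' := by
  unfold dom
  simp only [Set.mem_setOf_eq, join_zero h0]

lemma dom_join_one {h' g' : Problem} {w : Baire} (h1 : w 0 = 1) :
    w ∈ dom (join h' g') ↔ (fun n => w (n + 1)) ∈ dom g' := by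
  unfold dom
  simp only [Set.mem_setOf_eq, join_one h1]

/-- If `f ≰_W id` has singleton domain, then for every `h` with `f ≰_W h` there is
`g <_W f` with `g ≰_W h`; consequently `h <_W h ⊔ g <_W h ⊔ f`. -/
theorem non_empty_interval (f : Problem) (hnc : ¬ WLE f idB)
    (hsing : ∃ x : Baire, dom f = {x}) :
    ∀ h : Problem, ¬ WLE f h →
      ∃ g : Problem, WLT g f ∧ ¬ WLE g h ∧
        WLT h (join h g) ∧ WLT (join h g) (join h f) := by
  classical
  obtain ⟨x, hdom⟩ := hsing
  intro h hfh
  have hx : x ∈ dom f := by rw [hdom]; rfl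
  have hA : (f x).Nonempty := hx
  -- No value prefix-computed from `x` is a solution of `f`.
  have hNC : ∀ (t : List ℕ → ℕ → ℕ), Primrec₂ t → ∀ (T : Baire → Baire),
      (∀ p k m, m < k → t (pref p k) m = T p m) → ∀ b v, FEval b (T x) v → v ∉ f x := by
    intro t ht T hsync b v hv hvA
    apply hnc
    obtain ⟨α, hα⟩ := exists_alpha t ht T hsync
    obtain ⟨β, hβ⟩ := exists_transfer_pair b t ht T hsync
    refine ⟨α, β, fun p hp => ?_⟩
    have hpx : p = x := by rwa [hdom] at hp
    subst hpx
    refine ⟨T p, hα p, ⟨T p, rfl⟩, fun q hq => ?_⟩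
    have hqT : q = T p := hq
    subst hqT
    refine ⟨v, ?_, hvA⟩
    apply hβ (pair p (T p)) v
    rw [left_pair]
    exact hv
  -- The "all values on the cons-0 side" case gives `f ≤W h`, contradiction.
  have hCaseA : ∀ (a b : ℕ) (w : Baire) (t t' : List ℕ → ℕ → ℕ), Primrec₂ t → Primrec₂ t' →
      ∀ (T T' : Baire → Baire), (∀ p k m, m < k → t (pref p k) m = T p m) →
      (∀ p k m, m < k → t' (pref p k) m = T' p m) →
      T x = w → (∀ q : Baire, T' (pair x q) = pair w q) →
      ¬ ∃ p', FEval a w p' ∧ p' ∈ dom h ∧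
        ∀ q ∈ h p', ∃ v, FEval b (pair w q) v ∧ ∃ z ∈ f x, v = cons 0 z := by
    rintro a b w t t' ht ht' T T' hs hs' hTx hT' ⟨p', hp', hpd, hall⟩
    apply hfh
    obtain ⟨a', ha'⟩ := exists_transfer a t ht T hs id Computable.id
    obtain ⟨b', hb'⟩ := exists_transfer b t' ht' T' hs' Nat.succ (Primrec.succ.to_comp)
    refine ⟨a', b', fun p hp => ?_⟩
    have hpx : p = x := by rwa [hdom] at hp
    subst hpx
    refine ⟨p', ?_, hpd, fun q hq => ?_⟩
    · exact ha' p p' (by rw [hTx]; exact hp')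
    · obtain ⟨v, hv, z, hz, hze⟩ := hall q hq
      refine ⟨z, ?_, hz⟩
      have h2 := hb' (pair p q) v (by rw [hT' q]; exact hv)
      refine FEval_ext h2 fun m => ?_
      rw [hze]
      rfl
  -- (R0)  g ≤W f
  have hR0 : WLE (gP f h x) f := by
    obtain ⟨eL, heL⟩ := exists_eL
    obtain ⟨eB, heB⟩ := exists_eC0R
    refine ⟨eL, eB, fun p hp => ?_⟩
    rw [gP_dom hdom] at hp
    obtain ⟨n, rfl⟩ := hp
    refine ⟨x, ?_, hx, fun q hq => ?_⟩
    · have := heL (yI x n)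
      rwa [show left (yI x n) = x from left_pair _ _] at this
    · refine ⟨cons 0 q, ?_, ?_⟩
      · have := heB (pair (yI x n) q)
        rwa [right_pair] at this
      · exact (gP_mem hdom n _).2 (Or.inl ⟨q, hq, rfl⟩)
  -- (R4)  ¬ f ≤W g
  have hR4 : ¬ WLE f (gP f h x) := by
    rintro ⟨a, b, hab⟩
    obtain ⟨p', hp', hpd, hback⟩ := hab x hx
    rw [gP_dom hdom] at hpd
    obtain ⟨m, rfl⟩ := hpd
    obtain ⟨v, hv, hvA⟩ := hback _ ((gP_mem hdom m _).2 (Or.inr rfl))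
    exact hNC (t6 (chiD h x m)) (t6_primrec _)
      (fun p => pair p (cons 1 (const (chiD h x m)))) (sync6 _) b v hv hvA
  -- (R1)  ¬ g ≤W h
  have hR1 : ¬ WLE (gP f h x) h := by
    rintro ⟨a, b, hab⟩
    have hy : yI x (Nat.pair (Nat.pair a b) 0) ∈ dom (gP f h x) := by
      rw [gP_dom hdom]; exact ⟨_, rfl⟩
    refine key_defeat hdom (w := yI x (Nat.pair (Nat.pair a b) 0))
      (a := a) (b := b) (n := Nat.pair (Nat.pair a b) 0) ?_ (hab _ hy) ?_
    · simp [Dset, Nat.unpair_pair]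
    · exact hCaseA a b _ (t0 (Nat.pair (Nat.pair a b) 0)) (t1 (Nat.pair (Nat.pair a b) 0))
        (t0_primrec _) (t1_primrec _)
        (fun p => pair p (const (Nat.pair (Nat.pair a b) 0)))
        (fun y => pair (pair (left y) (const (Nat.pair (Nat.pair a b) 0))) (right y))
        (sync0 _) (sync1 _) rfl
        (fun q => by simp only [left_pair, right_pair]; rfl)
  -- (R2)  ¬ (h ⊔ g) ≤W h
  have hR2 : ¬ WLE (join h (gP f h x)) h := by
    rintro ⟨a, b, hab⟩
    have hz : zI x (Nat.pair (Nat.pair a b) 1) ∈ dom (join h (gP f h x)) := by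
      show (join h (gP f h x) (zI x (Nat.pair (Nat.pair a b) 1))).Nonempty
      rw [zI, join_cons1]
      exact ⟨_, (gP_mem hdom _ _).2 (Or.inr rfl)⟩
    obtain ⟨p', hp', hpd, hback⟩ := hab _ hz
    refine key_defeat (f := f) (h := h) hdom (w := zI x (Nat.pair (Nat.pair a b) 1))
      (a := a) (b := b) (n := Nat.pair (Nat.pair a b) 1) ?_ ?_ ?_
    · simp [Dset, Nat.unpair_pair]
    · refine ⟨p', hp', hpd, fun q hq => ?_⟩
      obtain ⟨v, hv, hvg⟩ := hback q hq
      rw [zI, join_cons1] at hvg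
      exact ⟨v, hv, hvg⟩
    · exact hCaseA a b _ (t2 (Nat.pair (Nat.pair a b) 1)) (t3 (Nat.pair (Nat.pair a b) 1))
        (t2_primrec _) (t3_primrec _)
        (fun p => cons 1 (pair p (const (Nat.pair (Nat.pair a b) 1))))
        (fun y => pair (cons 1 (pair (left y) (const (Nat.pair (Nat.pair a b) 1)))) (right y))
        (sync2 _) (sync3 _) rfl
        (fun q => by simp only [left_pair, right_pair]; rfl)
  -- (C1)  h ≤W h ⊔ g
  have hC1 : WLE h (join h (gP f h x)) := by
    obtain ⟨eF, heF⟩ := exists_eC0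
    obtain ⟨eB, heB⟩ := exists_eR
    refine ⟨eF, eB, fun p hp => ?_⟩
    refine ⟨cons 0 p, heF p, ?_, fun q hq => ?_⟩
    · show (join h (gP f h x) (cons 0 p)).Nonempty
      rw [join_cons0]
      exact hp
    · rw [join_cons0] at hq
      refine ⟨q, ?_, ?_⟩
      · have := heB (pair p q)
        rwa [right_pair] at this
      · exact hq
  -- (D1)  h ⊔ g ≤W h ⊔ f
  have hD1 : WLE (join h (gP f h x)) (join h f) := by
    obtain ⟨eF, heF⟩ := exists_eD1F
    obtain ⟨eB, heB⟩ := exists_eD1B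
    refine ⟨eF, eB, fun w hw => ?_⟩
    by_cases h1 : w 0 = 1
    · have hgd := (dom_join_one h1).1 hw
      rw [gP_dom hdom] at hgd
      obtain ⟨m, hm⟩ := hgd
      have hrw : right w = x := by
        funext n
        show w (2 * n + 1) = x n
        exact (congrFun hm (2 * n)).trans (pair_even x (const m) n)
      refine ⟨cons 1 x, ?_, ?_, fun q hq => ?_⟩
      · have := (heF w).1 h1
        rwa [hrw] at this
      · show (join h f (cons 1 x)).Nonempty
        rw [join_cons1]
        exact hA
      · rw [join_cons1] at hq
        refine ⟨cons 0 q, ?_, ?_⟩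
        · have := (heB (pair w q)).2 (by rw [pair_apply_zero, h1]; omega)
          rwa [right_pair] at this
        · rw [join_one h1, hm]
          exact (gP_mem hdom m _).2 (Or.inl ⟨q, hq, rfl⟩)
    · by_cases h0 : w 0 = 0
      · refine ⟨w, (heF w).2 h1, ?_, fun q hq => ?_⟩
        · exact (dom_join_zero h0).2 ((dom_join_zero h0).1 hw)
        · rw [join_zero h0] at hq
          refine ⟨q, ?_, ?_⟩
          · have := (heB (pair w q)).1 (by rw [pair_apply_zero]; exact h0)
            rwa [right_pair] at this
          · rw [join_zero h0]; exact hq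
      · exfalso
        have he : join h (gP f h x) w = ∅ := join_other h0 h1
        have h2 := hw
        rw [dom, Set.mem_setOf_eq, he] at h2
        exact Set.not_nonempty_empty h2
  -- (R3)  ¬ (h ⊔ f) ≤W (h ⊔ g)
  have hR3 : ¬ WLE (join h f) (join h (gP f h x)) := by
    rintro ⟨a, b, hab⟩
    have hw : cons 1 x ∈ dom (join h f) := by
      show (join h f (cons 1 x)).Nonempty
      rw [join_cons1]; exact hA
    obtain ⟨p', hp', hpd, hback⟩ := hab _ hw
    by_cases h0 : p' 0 = 0
    · apply hfh
      obtain ⟨a', ha'⟩ := exists_transfer a t4 t4_primrec (fun p => cons 1 p) sync4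
        Nat.succ (Primrec.succ.to_comp)
      obtain ⟨b', hb'⟩ := exists_transfer b t5 t5_primrec
        (fun y => pair (cons 1 (left y)) (right y)) sync5 id Computable.id
      refine ⟨a', b', fun p hp => ?_⟩
      have hpx : p = x := by rwa [hdom] at hp
      subst hpx
      refine ⟨fun n => p' (n + 1), ?_, ?_, fun q hq => ?_⟩
      · exact ha' p p' hp'
      · exact (dom_join_zero h0).1 hpd
      · have hq' : q ∈ join h (gP f h p) p' := by rw [join_zero h0]; exact hq
        obtain ⟨v, hv, hvf⟩ := hback q hq'
        rw [join_cons1] at hvf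
        refine ⟨v, ?_, hvf⟩
        exact hb' (pair p q) v (by simp only [left_pair, right_pair]; exact hv)
    · by_cases h1 : p' 0 = 1
      · have hgd := (dom_join_one h1).1 hpd
        rw [gP_dom hdom] at hgd
        obtain ⟨m, hm⟩ := hgd
        have hs : cons 1 (const (chiD h x m)) ∈ join h (gP f h x) p' := by
          rw [join_one h1, hm]
          exact (gP_mem hdom m _).2 (Or.inr rfl)
        obtain ⟨v, hv, hvf⟩ := hback _ hs
        rw [join_cons1] at hvf
        exact hNC (t7 (chiD h x m)) (t7_primrec _)
          (fun p => pair (cons 1 p) (cons 1 (const (chiD h x m)))) (sync7 _) b v hv hvf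
      · have he : join h (gP f h x) p' = ∅ := join_other h0 h1
        have h2 := hpd
        rw [dom, Set.mem_setOf_eq, he] at h2
        exact Set.not_nonempty_empty h2
  exact ⟨gP f h x, ⟨hR0, hR4⟩, hR1, ⟨hC1, hR2⟩, ⟨hD1, hR3⟩⟩

end WeihrauchPaper
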